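/- If X is a Yetter-Drinfeld module and X' an anti-Yetter-Drinfeld module over H, then X⊗X' with diagonal H-action h(x⊗x') = h₍₁₎x ⊗ h₍₂₎x' and coaction ρ(x⊗x') = x₍₋₁₎x'₍₋₁₎ ⊗ x₍₀₎ ⊗ x'₍₀₎ is an anti-Yetter-Drinfeld module: ρ(h(x⊗x')) = h₍₁₎ x₍₋₁₎x'₍₋₁₎ S⁻¹(h₍₃₎) ⊗ h₍₂₎(x₍₀₎⊗x'₍₀₎). -/

import Mathlib

/- STATEMENT 15: If X is a Yetter-Drinfeld module and X' an anti-Yetter-Drinfeld module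
over H, then X⊗X' with the diagonal action h(x⊗x') = h₍₁₎x ⊗ h₍₂₎x' and the codiagonal
coaction ρ(x⊗x') = x₍₋₁₎x'₍₋₁₎ ⊗ x₍₀₎ ⊗ x'₍₀₎ is an anti-Yetter-Drinfeld module. -/

open TensorProduct

noncomputable section

variable (k : Type) [Field k] (H : Type) [Ring H] [HopfAlgebra k H]

def Delta2 : H →ₗ[k] (H ⊗[k] H) ⊗[k] H :=
  (TensorProduct.map Coalgebra.comul LinearMap.id) ∘ₗ Coalgebra.comul

variable {A B C : Type} [AddCommGroup A] [AddCommGroup B] [AddCommGroup C]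
  [Module k A] [Module k B] [Module k C]

def sw3 : (A ⊗[k] B) ⊗[k] C →ₗ[k] (A ⊗[k] C) ⊗[k] B :=
  (TensorProduct.assoc k A C B).symm.toLinearMap
    ∘ₗ (TensorProduct.map LinearMap.id (TensorProduct.comm k B C).toLinearMap)
    ∘ₗ (TensorProduct.assoc k A B C).toLinearMap

def twist (X : Type) [AddCommGroup X] [Module k X] (Sm : H →ₗ[k] H)
    (act : H ⊗[k] X →ₗ[k] X) : H ⊗[k] (H ⊗[k] X) →ₗ[k] H ⊗[k] X :=
  (TensorProduct.map (LinearMap.mul' k H) act)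
    ∘ₗ (TensorProduct.tensorTensorTensorComm k H H H X).toLinearMap
    ∘ₗ (TensorProduct.map
          ((TensorProduct.map (LinearMap.mul' k H) LinearMap.id) ∘ₗ sw3 k)
          (TensorProduct.map Sm LinearMap.id))
    ∘ₗ (TensorProduct.tensorTensorTensorComm k (H ⊗[k] H) H H X).toLinearMap
    ∘ₗ (TensorProduct.map (Delta2 k H) LinearMap.id)

def actMap (X : Type) [AddCommGroup X] [Module k X] [Module H X]
    [IsScalarTower k H X] [SMulCommClass H k X] : H ⊗[k] X →ₗ[k] X :=
  TensorProduct.lift (LinearMap.mk₂ k (fun (h : H) (x : X) => h • x)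
    (fun h h' x => add_smul h h' x)
    (fun c h x => smul_assoc c h x)
    (fun h x y => smul_add h x y)
    (fun c h x => smul_comm h c x))

variable (X X' : Type) [AddCommGroup X] [Module k X] [Module H X]
  [IsScalarTower k H X] [SMulCommClass H k X]
  [AddCommGroup X'] [Module k X'] [Module H X']
  [IsScalarTower k H X'] [SMulCommClass H k X']

/-- The diagonal action `h ⊗ (x ⊗ x') ↦ h₍₁₎x ⊗ h₍₂₎x'`. -/
def actT : H ⊗[k] (X ⊗[k] X') →ₗ[k] X ⊗[k] X' :=
  (TensorProduct.map (actMap k H X) (actMap k H X'))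
    ∘ₗ (TensorProduct.tensorTensorTensorComm k H H X X').toLinearMap
    ∘ₗ (TensorProduct.map Coalgebra.comul LinearMap.id)

/-- The codiagonal coaction `x ⊗ x' ↦ x₍₋₁₎x'₍₋₁₎ ⊗ (x₍₀₎ ⊗ x'₍₀₎)`. -/
def rhoT (rho : X →ₗ[k] H ⊗[k] X) (rho' : X' →ₗ[k] H ⊗[k] X') :
    X ⊗[k] X' →ₗ[k] H ⊗[k] (X ⊗[k] X') :=
  (TensorProduct.map (LinearMap.mul' k H) LinearMap.id)
    ∘ₗ (TensorProduct.tensorTensorTensorComm k H X H X').toLinearMap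
    ∘ₗ (TensorProduct.map rho rho')


/-! Reduce to `w = x ⊗ x'` with `ρx = a ⊗ y` and `ρ'x' = b ⊗ y'`. Both sides are then images of
elements of `H ⊗ H ⊗ H` under `p ⊗ q ⊗ r ↦ p ⊗ (q y ⊗ r y')`, and it remains to show
`h₍₁₎ a S(h₍₃₎) h₍₄₎ b S'(h₍₆₎) ⊗ h₍₂₎ ⊗ h₍₅₎ = h₍₁₎ a b S'(h₍₄₎) ⊗ h₍₂₎ ⊗ h₍₃₎`.
In the convolution algebra of linear maps `H → H ⊗ H ⊗ H` each side is a convolution product of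
the three inclusions `h ↦ h ⊗ 1 ⊗ 1`, `h ↦ 1 ⊗ h ⊗ 1`, `h ↦ 1 ⊗ 1 ⊗ h`, their composites with
`S`, `S'`, and constants; the identity follows from `S * id = 1` and the fact that the constant
`b ⊗ 1 ⊗ 1` commutes with the values `1 ⊗ h ⊗ 1`. -/

open WithConv
open Algebra.TensorProduct (includeLeft includeRight)

namespace LinearMap

section Coalgebra

variable {R D E : Type*} [CommSemiring R] [AddCommMonoid D] [Module R D] [Coalgebra R D]
  [Semiring E] [Algebra R E]

def convConst (z : E) : WithConv (D →ₗ[R] E) :=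
  toConv (toSpanSingleton R E z ∘ₗ Coalgebra.counit)

lemma convConst_convMul (z : E) (f : WithConv (D →ₗ[R] E)) :
    convConst z * f = toConv (mulLeft R z ∘ₗ f.ofConv) := by
  ext; simp [convConst, ← map_comp_rTensor]

lemma convMul_convConst (f : WithConv (D →ₗ[R] E)) (z : E) :
    f * convConst z = toConv (mulRight R z ∘ₗ f.ofConv) := by
  ext; simp [convConst, ← map_comp_lTensor]

lemma convConst_mul_convConst (y z : E) :
    convConst (R := R) (D := D) y * convConst z = convConst (y * z) := by
  rw [convConst_convMul]; ext; simp [convConst]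

lemma commute_convConst {f : WithConv (D →ₗ[R] E)} {z : E} (h : ∀ d, Commute z (f d)) :
    Commute (convConst z) f := by
  rw [Commute, SemiconjBy, convConst_convMul, convMul_convConst]
  ext d; exact (h d).eq

end Coalgebra

section Bialgebra

variable {R D E : Type*} [CommSemiring R] [Semiring D] [Bialgebra R D] [Semiring E] [Algebra R E]

lemma algHom_comp_mulRight (φ : D →ₐ[R] E) (a : D) :
    toConv (φ.toLinearMap ∘ₗ mulRight R a) = toConv φ.toLinearMap * convConst (φ a) := by
  rw [convMul_convConst]; ext; simp

lemma includeLeft_convMul_includeRight :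
    toConv (includeLeft : D →ₐ[R] D ⊗[R] D).toLinearMap *
      toConv (includeRight : D →ₐ[R] D ⊗[R] D).toLinearMap =
      toConv (Coalgebra.comul (R := R) (A := D)) := by
  have h : mul' R (D ⊗[R] D) ∘ₗ
      map (includeLeft : D →ₐ[R] D ⊗[R] D).toLinearMap
        (includeRight : D →ₐ[R] D ⊗[R] D).toLinearMap = LinearMap.id := by
    ext; simp
  rw [convMul_def, ← comp_assoc, h, id_comp]

end Bialgebra

end LinearMap

namespace HopfAlgebra

open LinearMap

variable {R U : Type*} [CommSemiring R] [Semiring U] [HopfAlgebra R U]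

lemma algHom_comp_antipode_convMul {B : Type*} [Semiring B] [Algebra R B] (φ : U →ₐ[R] B) :
    toConv (φ.toLinearMap ∘ₗ antipode R) * toConv φ.toLinearMap = 1 := by
  have h := algHom_comp_convMul_distrib φ (toConv (antipode R)) (toConv LinearMap.id)
  rw [ofConv_toConv, ofConv_toConv, comp_id, antipode_mul_id] at h
  apply WithConv.ofConv_injective
  rw [← h]; ext; simp

/-- `g ↦ g₍₁₎ a S(g₍₃₎) ⊗ g₍₂₎`, the coefficient pattern of `twist`. -/
def sandwich (S : U →ₗ[R] U) (a : U) : WithConv (U →ₗ[R] U ⊗[R] U) :=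
  toConv ((includeLeft : U →ₐ[R] U ⊗[R] U).toLinearMap ∘ₗ mulRight R a) *
    toConv (includeRight : U →ₐ[R] U ⊗[R] U).toLinearMap *
    toConv ((includeLeft : U →ₐ[R] U ⊗[R] U).toLinearMap ∘ₗ S)

lemma algHom_comp_sandwich {B : Type*} [Semiring B] [Algebra R B] (φ : U ⊗[R] U →ₐ[R] B)
    (S : U →ₗ[R] U) (a : U) :
    toConv (φ.toLinearMap ∘ₗ (sandwich S a).ofConv) =
      toConv (φ.toLinearMap ∘ₗ (includeLeft : U →ₐ[R] U ⊗[R] U).toLinearMap ∘ₗ mulRight R a) *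
        toConv (φ.comp includeRight).toLinearMap *
        toConv (φ.toLinearMap ∘ₗ (includeLeft : U →ₐ[R] U ⊗[R] U).toLinearMap ∘ₗ S) := by
  rw [sandwich, algHom_comp_convMul_distrib, algHom_comp_convMul_distrib]
  rfl

lemma sandwich_convMul_sandwich (S' : U →ₗ[R] U) (a b : U) :
    toConv ((Algebra.TensorProduct.map (AlgHom.id R U)
        (includeLeft : U →ₐ[R] U ⊗[R] U)).toLinearMap ∘ₗ (sandwich (antipode R) a).ofConv) *
      toConv ((Algebra.TensorProduct.map (AlgHom.id R U)
        (includeRight : U →ₐ[R] U ⊗[R] U)).toLinearMap ∘ₗ (sandwich S' b).ofConv) =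
    toConv (lTensor U Coalgebra.comul ∘ₗ (sandwich S' (a * b)).ofConv) := by
  rw [show lTensor U Coalgebra.comul =
    (Algebra.TensorProduct.map (AlgHom.id R U) (Bialgebra.comulAlgHom R U)).toLinearMap from rfl]
  simp only [algHom_comp_sandwich, ← comp_assoc, ← AlgHom.comp_toLinearMap,
    Algebra.TensorProduct.map_comp_includeLeft, Algebra.TensorProduct.map_comp_includeRight,
    AlgHom.comp_id]
  simp only [AlgHom.comp_toLinearMap, algHom_comp_mulRight]
  set ι : U →ₐ[R] U ⊗[R] (U ⊗[R] U) := includeLeft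
  set ι₂ := toConv ((includeRight : U ⊗[R] U →ₐ[R] U ⊗[R] (U ⊗[R] U)).toLinearMap ∘ₗ
    (includeLeft : U →ₐ[R] U ⊗[R] U).toLinearMap)
  set ι₃ := toConv ((includeRight : U ⊗[R] U →ₐ[R] U ⊗[R] (U ⊗[R] U)).toLinearMap ∘ₗ
    (includeRight : U →ₐ[R] U ⊗[R] U).toLinearMap)
  have hι₂ : Commute (convConst (ι b)) ι₂ := commute_convConst fun x ↦ by
    simp [ι, ι₂, Commute, SemiconjBy]
  have hι₂₃ : ι₂ * ι₃ = toConv ((includeRight : U ⊗[R] U →ₐ[R] U ⊗[R] (U ⊗[R] U)).toLinearMap ∘ₗ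
      (Bialgebra.comulAlgHom R U).toLinearMap) := by
    apply WithConv.ofConv_injective
    rw [← algHom_comp_convMul_distrib, includeLeft_convMul_includeRight]
    rfl
  calc _ = toConv ι.toLinearMap * convConst (ι a) * ι₂ *
          (toConv (ι.toLinearMap ∘ₗ antipode R) * toConv ι.toLinearMap) * convConst (ι b) * ι₃ *
          toConv (ι.toLinearMap ∘ₗ S') := by simp only [mul_assoc]
    _ = toConv ι.toLinearMap * (convConst (ι a) * convConst (ι b)) * (ι₂ * ι₃) *
          toConv (ι.toLinearMap ∘ₗ S') := by
      rw [algHom_comp_antipode_convMul, mul_one, mul_assoc _ ι₂, ← hι₂.eq]; simp only [mul_assoc]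
    _ = _ := by rw [convConst_mul_convConst, ← map_mul, hι₂₃]

end HopfAlgebra

open LinearMap HopfAlgebra

section

variable (M N : Type) [AddCommGroup M] [Module k M] [AddCommGroup N] [Module k N]

def mulCoeffs : (H ⊗[k] M) ⊗[k] (H ⊗[k] N) →ₗ[k] H ⊗[k] (M ⊗[k] N) :=
  map (mul' k H) LinearMap.id ∘ₗ (tensorTensorTensorComm k H M H N).toLinearMap

variable {k H M N}

lemma mulCoeffs_map_lTensor_comp (f : H →ₗ[k] M) (g : H →ₗ[k] N) (P Q : H →ₗ[k] H ⊗[k] H)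
    (h : H) :
    mulCoeffs k H M N (map (lTensor H f ∘ₗ P) (lTensor H g ∘ₗ Q) (Coalgebra.comul h)) =
      lTensor H (map f g)
        ((toConv ((Algebra.TensorProduct.map (AlgHom.id k H)
            (includeLeft : H →ₐ[k] H ⊗[k] H)).toLinearMap ∘ₗ P) *
          toConv ((Algebra.TensorProduct.map (AlgHom.id k H)
            (includeRight : H →ₐ[k] H ⊗[k] H)).toLinearMap ∘ₗ Q)).ofConv h) := by
  have hmul : mulCoeffs k H M N ∘ₗ map (lTensor H f) (lTensor H g) =
      lTensor H (map f g) ∘ₗ mul' k (H ⊗[k] (H ⊗[k] H)) ∘ₗ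
        map (Algebra.TensorProduct.map (AlgHom.id k H)
            (includeLeft : H →ₐ[k] H ⊗[k] H)).toLinearMap
          (Algebra.TensorProduct.map (AlgHom.id k H)
            (includeRight : H →ₐ[k] H ⊗[k] H)).toLinearMap := by
    ext; simp [mulCoeffs]
  rw [convMul_apply, map_comp, comp_apply, ← comp_apply (mulCoeffs k H M N), hmul]
  simp only [comp_apply, map_comp]

lemma twist_comp_flip (S : H →ₗ[k] H) (act : H ⊗[k] M →ₗ[k] M) (a : H) (m : M) :
    twist k H M S act ∘ₗ (TensorProduct.mk k H (H ⊗[k] M)).flip (a ⊗ₜ m) =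
      lTensor H (act ∘ₗ (TensorProduct.mk k H M).flip m) ∘ₗ (sandwich S a).ofConv := by
  ext g
  simp only [twist, Delta2, sandwich, convMul_apply, comp_apply, map_tmul, flip_apply, mk_apply]
  induction Coalgebra.comul (R := k) g using TensorProduct.induction_on with
  | zero => simp
  | add x y hx hy => simp only [add_tmul, map_add, hx, hy]
  | tmul p q =>
    simp only [map_tmul, convMul_apply, comp_apply]
    induction Coalgebra.comul (R := k) p using TensorProduct.induction_on with
    | zero => simp
    | add x y hx hy => simp only [add_tmul, map_add, hx, hy]
    | tmul u v => simp [sw3, mul_assoc]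

variable {X X'}

lemma actT_comp_flip (x : X) (x' : X') :
    actT k H X X' ∘ₗ (TensorProduct.mk k H (X ⊗[k] X')).flip (x ⊗ₜ x') =
      map (actMap k H X ∘ₗ (TensorProduct.mk k H X).flip x)
        (actMap k H X' ∘ₗ (TensorProduct.mk k H X').flip x') ∘ₗ Coalgebra.comul := by
  ext h
  simp only [actT, comp_apply, flip_apply, mk_apply, map_tmul, id_apply]
  induction Coalgebra.comul (R := k) h using TensorProduct.induction_on with
  | zero => simp
  | add p q hp hq => simp only [add_tmul, map_add, hp, hq]
  | tmul p q => simp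

lemma mulCoeffs_map_twist (S' : H →ₗ[k] H) (u : H ⊗[k] X) (v : H ⊗[k] X') (h : H) :
    mulCoeffs k H X X'
        (map (twist k H X (antipode k) (actMap k H X) ∘ₗ (TensorProduct.mk k H _).flip u)
          (twist k H X' S' (actMap k H X') ∘ₗ (TensorProduct.mk k H _).flip v)
          (Coalgebra.comul h)) =
      twist k H (X ⊗[k] X') S' (actT k H X X') (h ⊗ₜ mulCoeffs k H X X' (u ⊗ₜ v)) := by
  induction u using TensorProduct.induction_on with
  | zero => simp
  | add u₁ u₂ h₁ h₂ =>
    simp only [map_add, comp_add, map_add_left, tmul_add, LinearMap.add_apply, add_tmul, h₁, h₂]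
  | tmul a x =>
  induction v using TensorProduct.induction_on with
  | zero => simp
  | add v₁ v₂ h₁ h₂ =>
    simp only [map_add, comp_add, map_add_right, tmul_add, LinearMap.add_apply, h₁, h₂]
  | tmul b x' =>
  calc _ = mulCoeffs k H X X' ((map
          (lTensor H (actMap k H X ∘ₗ (TensorProduct.mk k H X).flip x) ∘ₗ
            (sandwich (antipode k) a).ofConv)
          (lTensor H (actMap k H X' ∘ₗ (TensorProduct.mk k H X').flip x') ∘ₗ
            (sandwich S' b).ofConv)) (Coalgebra.comul h)) := by
        rw [twist_comp_flip, twist_comp_flip]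
    _ = lTensor H (actT k H X X' ∘ₗ (TensorProduct.mk k H (X ⊗[k] X')).flip (x ⊗ₜ x'))
          ((sandwich S' (a * b)).ofConv h) := by
        rw [mulCoeffs_map_lTensor_comp, sandwich_convMul_sandwich, actT_comp_flip, lTensor_comp]
        rfl
    _ = twist k H (X ⊗[k] X') S' (actT k H X X') (h ⊗ₜ ((a * b) ⊗ₜ (x ⊗ₜ x'))) :=
        (LinearMap.congr_fun (twist_comp_flip _ _ _ _) h).symm
    _ = _ := by simp [mulCoeffs]

end

theorem statement15
    (Sinv : H →ₗ[k] H)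
    (rho : X →ₗ[k] H ⊗[k] X) (rho' : X' →ₗ[k] H ⊗[k] X')
    -- `X` is a Yetter–Drinfeld module:
    (hYD : ∀ (h : H) (x : X), rho (h • x) =
        twist k H X (HopfAlgebra.antipode (R := k)) (actMap k H X) (h ⊗ₜ[k] rho x))
    -- `X'` is an anti-Yetter–Drinfeld module:
    (hAYD : ∀ (h : H) (x' : X'), rho' (h • x') =
        twist k H X' Sinv (actMap k H X') (h ⊗ₜ[k] rho' x')) :
    -- then `X ⊗ X'` is an anti-Yetter–Drinfeld module:
    ∀ (h : H) (w : X ⊗[k] X'),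
      rhoT k H X X' rho rho' (actT k H X X' (h ⊗ₜ[k] w)) =
        twist k H (X ⊗[k] X') Sinv (actT k H X X')
          (h ⊗ₜ[k] rhoT k H X X' rho rho' w) := by
  intro h w
  induction w using TensorProduct.induction_on with
  | zero => simp
  | add w₁ w₂ h₁ h₂ => simp only [tmul_add, map_add, h₁, h₂]
  | tmul x x' =>
    have hX : rho ∘ₗ actMap k H X ∘ₗ (TensorProduct.mk k H X).flip x =
        twist k H X (antipode k) (actMap k H X) ∘ₗ (TensorProduct.mk k H _).flip (rho x) :=
      LinearMap.ext fun p ↦ hYD p x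
    have hX' : rho' ∘ₗ actMap k H X' ∘ₗ (TensorProduct.mk k H X').flip x' =
        twist k H X' Sinv (actMap k H X') ∘ₗ (TensorProduct.mk k H _).flip (rho' x') :=
      LinearMap.ext fun p ↦ hAYD p x'
    calc rhoT k H X X' rho rho' (actT k H X X' (h ⊗ₜ (x ⊗ₜ x')))
        = mulCoeffs k H X X' (map rho rho'
            ((actT k H X X' ∘ₗ (TensorProduct.mk k H _).flip (x ⊗ₜ x')) h)) := rfl
      _ = mulCoeffs k H X X' (map (rho ∘ₗ actMap k H X ∘ₗ (TensorProduct.mk k H X).flip x)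
            (rho' ∘ₗ actMap k H X' ∘ₗ (TensorProduct.mk k H X').flip x') (Coalgebra.comul h)) := by
          rw [actT_comp_flip, comp_apply, ← comp_apply (map rho rho'), ← map_comp]
      _ = twist k H (X ⊗[k] X') Sinv (actT k H X X')
            (h ⊗ₜ mulCoeffs k H X X' (rho x ⊗ₜ rho' x')) := by
          rw [hX, hX', mulCoeffs_map_twist]

end
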